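/- If Q has an optimal solution P with cost C and makespan n satisfying the make-progress rule, then for any k ≤ n, the combination of the prefix of P of length k together with the delete-free relaxation of the remaining suffix of P forms a valid Variant-II solution at makespan k with total cost at most C. -/

import Mathlib

structure Strips (F A : Type) where
  init : Set F
  goal : Set F
  pre : A → Set F
  add : A → Set F
  del : A → Set F
  cost : A → ℕ

def Strips.step {F A : Type} (Q : Strips F A) (s : Set F) (a : A) : Set F :=
  (s \ Q.del a) ∪ Q.add a

def Strips.run {F A : Type} (Q : Strips F A) (s : Set F) (p : List A) : Set F :=
  p.foldl Q.step s

def Strips.ValidFrom {F A : Type} (Q : Strips F A) : Set F → List A → Prop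
  | _, [] => True
  | s, a :: p => Q.pre a ⊆ s ∧ Q.ValidFrom (Q.step s a) p

def Strips.Solves {F A : Type} (Q : Strips F A) (p : List A) : Prop :=
  Q.ValidFrom Q.init p ∧ Q.goal ⊆ Q.run Q.init p

def Strips.planCost {F A : Type} (Q : Strips F A) (p : List A) : ℕ :=
  (p.map Q.cost).sum

/-- The layered make-progress rule: in the induced state sequence, no state at a
later index is a subset of a state at an earlier index. -/
def Strips.MakesProgress {F A : Type} (Q : Strips F A) (s : Set F) (p : List A) : Prop :=
  ∀ i j : ℕ, i < j → j ≤ p.length → ¬ Q.run s (p.take j) ⊆ Q.run s (p.take i)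

/-- The delete-free relaxation: all delete-effects removed. -/
def Strips.relax {F A : Type} (Q : Strips F A) : Strips F A :=
  { Q with del := fun _ => ∅ }

/-- The distinct actions of a list, in order of first occurrence. -/
def firstDedup {A : Type} [DecidableEq A] : List A → List A
  | [] => []
  | a :: l => a :: firstDedup (l.filter (· ≠ a))
termination_by l => l.length
decreasing_by
  simp only [List.length_cons]
  first
    | exact Nat.lt_succ_of_le (List.length_filter_le _ _)
    | (rw [List.length_unattach]; exact Nat.lt_succ_of_le ((List.length_filter_le _ _).trans (le_of_eq List.length_attach)))
    | (simp only [List.length_unattach, List.length_attach]; exact Nat.lt_succ_of_le (List.length_filter_le _ _))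


/-
The prefix inherits validity and the make-progress rule directly from `P`. Let `S` be the state
it reaches. The relaxed state after applying `P.drop k` from `S` is `S` together with the
add-effects of those actions, so it contains the real state reached by `P`, hence the goal, and
it depends only on the set of actions used. Repeated actions are therefore redundant in the
relaxation, and keeping only first occurrences preserves relaxed validity while it can only
lower the cost.
-/

section FirstDedup

variable {A : Type} [DecidableEq A]

-- `firstDedup.induct` phrases its hypothesis through `List.attach` and `List.unattach`.
@[elab_as_elim]
theorem firstDedup_induction {motive : List A → Prop} (nil : motive [])
    (cons : ∀ a l, motive (l.filter (· ≠ a)) → motive (a :: l)) (l : List A) : motive l := by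
  induction l using firstDedup.induct with
  | case1 => exact nil
  | case2 a l ih =>
    refine cons a l ?_
    simpa only [List.unattach_filter (f := fun x : {x // x ∈ l} => decide (x.1 ≠ a))
      (g := fun x => decide (x ≠ a)) (hf := fun _ _ => rfl), List.unattach_attach] using ih

@[simp]
theorem mem_firstDedup {a : A} {l : List A} : a ∈ firstDedup l ↔ a ∈ l := by
  induction l using firstDedup_induction with
  | nil => simp [firstDedup]
  | cons b l ih =>
    rw [firstDedup.eq_2, List.mem_cons, ih, List.mem_filter, List.mem_cons]
    by_cases hab : a = b <;> simp [hab]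

theorem firstDedup_sublist (l : List A) : (firstDedup l).Sublist l := by
  induction l using firstDedup_induction with
  | nil => simp [firstDedup]
  | cons a l ih =>
    rw [firstDedup.eq_2]
    exact (ih.trans List.filter_sublist).cons_cons a

end FirstDedup

namespace Strips

variable {F A : Type} (Q : Strips F A)

theorem run_append (s : Set F) (p q : List A) : Q.run s (p ++ q) = Q.run (Q.run s p) q :=
  List.foldl_append

theorem validFrom_append (s : Set F) (p q : List A) :
    Q.ValidFrom s (p ++ q) ↔ Q.ValidFrom s p ∧ Q.ValidFrom (Q.run s p) q := by
  induction p generalizing s with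
  | nil => simp [ValidFrom, run]
  | cons a p ih => simp only [List.cons_append, ValidFrom, ih, and_assoc, run, List.foldl_cons]

theorem planCost_append (p q : List A) : Q.planCost (p ++ q) = Q.planCost p + Q.planCost q := by
  simp [planCost]

theorem planCost_le_of_sublist {p q : List A} (h : p.Sublist q) : Q.planCost p ≤ Q.planCost q :=
  (h.map Q.cost).sum_le_sum fun _ _ => Nat.zero_le _

variable {Q}

theorem MakesProgress.take {s : Set F} {p : List A} (h : Q.MakesProgress s p) (k : ℕ) :
    Q.MakesProgress s (p.take k) := by
  intro i j hij hj
  rw [List.length_take] at hj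
  rw [List.take_take, List.take_take, min_eq_left (le_min_iff.mp hj).1,
    min_eq_left (hij.le.trans (le_min_iff.mp hj).1)]
  exact h i j hij (le_min_iff.mp hj).2

variable (Q)

@[simp]
theorem planCost_relax : Q.relax.planCost = Q.planCost := rfl

theorem relax_step (s : Set F) (a : A) : Q.relax.step s a = s ∪ Q.add a := by
  simp [relax, step]

theorem relax_run (s : Set F) (p : List A) : Q.relax.run s p = s ∪ ⋃ a ∈ p, Q.add a := by
  induction p generalizing s with
  | nil => simp [run]
  | cons a p ih =>
    rw [run, List.foldl_cons, ← run, ih, relax_step]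
    simp only [List.mem_cons, Set.iUnion_or, Set.iUnion_union_distrib, Set.iUnion_iUnion_eq_left,
      Set.union_assoc]

theorem run_subset_relax_run (s : Set F) (p : List A) : Q.run s p ⊆ Q.relax.run s p := by
  induction p generalizing s with
  | nil => exact subset_rfl
  | cons a p ih =>
    refine (ih (Q.step s a)).trans ?_
    rw [relax_run, relax_run, step]
    simp only [List.mem_cons, Set.iUnion_or, Set.iUnion_union_distrib, Set.iUnion_iUnion_eq_left,
      ← Set.union_assoc]
    gcongr
    exact Set.sdiff_subset

theorem relax_run_firstDedup [DecidableEq A] (s : Set F) (p : List A) :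
    Q.relax.run s (firstDedup p) = Q.relax.run s p := by
  simp only [relax_run, mem_firstDedup]

variable {Q}

theorem ValidFrom.relax {s t : Set F} {p : List A} (h : Q.ValidFrom s p) (hst : s ⊆ t) :
    Q.relax.ValidFrom t p := by
  induction p generalizing s t with
  | nil => trivial
  | cons a p ih =>
    refine ⟨h.1.trans hst, ih h.2 ?_⟩
    rw [relax_step, step]
    gcongr
    exact Set.sdiff_subset.trans hst

theorem relax_validFrom_filter_ne [DecidableEq A] {s : Set F} {a : A} {p : List A}
    (h : Q.relax.ValidFrom s p) (ha : Q.add a ⊆ s) :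
    Q.relax.ValidFrom s (p.filter (· ≠ a)) := by
  induction p generalizing s with
  | nil => trivial
  | cons b p ih =>
    obtain ⟨hpre, hp⟩ := h
    rw [relax_step] at hp
    by_cases hba : b = a
    · subst hba
      rw [Set.union_eq_left.mpr ha] at hp
      simpa using ih hp ha
    · simpa [hba, ValidFrom, relax_step, hpre] using ih hp (ha.trans Set.subset_union_left)

theorem relax_validFrom_firstDedup [DecidableEq A] {s : Set F} {p : List A}
    (h : Q.relax.ValidFrom s p) : Q.relax.ValidFrom s (firstDedup p) := by
  induction p using firstDedup_induction generalizing s with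
  | nil => simp [firstDedup, ValidFrom]
  | cons a l ih =>
    obtain ⟨hpre, hl⟩ := h
    rw [firstDedup.eq_2]
    refine ⟨hpre, ih (relax_validFrom_filter_ne hl ?_)⟩
    rw [relax_step]
    exact Set.subset_union_right

end Strips

theorem variantII_soundness_general {F A : Type} [DecidableEq A] (Q : Strips F A)
    (P : List A) (hP : Q.Solves P) (hprog : Q.MakesProgress Q.init P)
    (k : ℕ) :
    Q.ValidFrom Q.init (P.take k) ∧
    Q.MakesProgress Q.init (P.take k) ∧
    Q.relax.ValidFrom (Q.run Q.init (P.take k)) (firstDedup (P.drop k)) ∧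
    Q.goal ⊆ Q.relax.run (Q.run Q.init (P.take k)) (firstDedup (P.drop k)) ∧
    Q.planCost (P.take k) + Q.relax.planCost (firstDedup (P.drop k)) ≤
      Q.planCost P := by
  obtain ⟨hvalid, hgoal⟩ := hP
  rw [← List.take_append_drop k P, Strips.validFrom_append] at hvalid
  rw [← List.take_append_drop k P, Strips.run_append] at hgoal
  refine ⟨hvalid.1, hprog.take k,
    Strips.relax_validFrom_firstDedup (hvalid.2.relax subset_rfl), ?_, ?_⟩
  · rw [Strips.relax_run_firstDedup]
    exact hgoal.trans (Strips.run_subset_relax_run Q _ _)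
  · calc Q.planCost (P.take k) + Q.relax.planCost (firstDedup (P.drop k))
        ≤ Q.planCost (P.take k) + Q.planCost (P.drop k) := by
          rw [Strips.planCost_relax]
          gcongr
          exact Strips.planCost_le_of_sublist Q (firstDedup_sublist _)
      _ = Q.planCost P := by rw [← Strips.planCost_append, List.take_append_drop]

/-- Variant-II soundness: if `Q` has an optimal solution `P` with cost `C` and
makespan `n` satisfying the make-progress rule, then for any `k ≤ n`, the prefix of
`P` of length `k` (valid and making progress) together with the delete-free
relaxation of the remaining suffix of `P` (its distinct actions solve the relaxation
from the intermediate state) forms a valid Variant-II solution at makespan `k` with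
total cost at most `C`. -/
theorem variantII_soundness {F A : Type} [DecidableEq A] (Q : Strips F A)
    (P : List A) (hP : Q.Solves P) (hprog : Q.MakesProgress Q.init P)
    (hopt : ∀ P' : List A, Q.Solves P' → Q.planCost P ≤ Q.planCost P')
    (k : ℕ) (hk : k ≤ P.length) :
    Q.ValidFrom Q.init (P.take k) ∧
    Q.MakesProgress Q.init (P.take k) ∧
    Q.relax.ValidFrom (Q.run Q.init (P.take k)) (firstDedup (P.drop k)) ∧
    Q.goal ⊆ Q.relax.run (Q.run Q.init (P.take k)) (firstDedup (P.drop k)) ∧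
    Q.planCost (P.take k) + Q.relax.planCost (firstDedup (P.drop k)) ≤
      Q.planCost P :=
  variantII_soundness_general Q P hP hprog k
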